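/- arXiv:1306.3200 — 2 statements merged into one kernel-verified Lean document; each statement's English description precedes it below -/
import Mathlib

section
/- With U, U', w_j^± as above, U' equals the product of the N reflection operators R_{w_j^−} = I − 2|w_j^−⟩⟨w_j^−| (in any order), i.e. U' = ∏_{j=1}^{N} (I − 2 P_j^−) where P_j^− is the orthogonal projection onto span(w_j^−). -/
open Matrix Complex BigOperators Kronecker

/-- Rank-one outer product |ψ⟩⟨ψ| as a matrix. -/
noncomputable def outerProd {d : Type*} [Fintype d] (ψ : d → ℂ) : Matrix d d ℂ :=
  Matrix.vecMulVec ψ (star ψ)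

/-- Reflection operator R_ψ = I - 2|ψ⟩⟨ψ|. -/
noncomputable def reflOp {d : Type*} [Fintype d] [DecidableEq d] (ψ : d → ℂ) : Matrix d d ℂ :=
  1 - (2 : ℂ) • outerProd ψ

/-- A matrix is unitary. -/
def IsUnitaryM {d : Type*} [Fintype d] [DecidableEq d] (A : Matrix d d ℂ) : Prop :=
  Aᴴ * A = 1 ∧ A * Aᴴ = 1

/-- ψ is a unit vector. -/
def IsUnitVec {d : Type*} [Fintype d] (ψ : d → ℂ) : Prop :=
  ∑ i, ‖ψ i‖ ^ 2 = 1

/-- Euclidean norm of a vector. -/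
noncomputable def evnorm {d : Type*} [Fintype d] (v : d → ℂ) : ℝ :=
  Real.sqrt (∑ i, ‖v i‖ ^ 2)

/-- Frobenius (Hilbert–Schmidt) norm ‖A‖_Fr = √(Tr(A Aᴴ)). -/
noncomputable def frobNorm {d : Type*} [Fintype d] (A : Matrix d d ℂ) : ℝ :=
  Real.sqrt ((Matrix.trace (A * Aᴴ)).re)

/-- Hermitian inner product ⟨v, w⟩ = ∑ conj(vᵢ) wᵢ. -/
noncomputable def hinner {d : Type*} [Fintype d] (v w : d → ℂ) : ℂ :=
  ∑ i, (starRingEnd ℂ) (v i) * w i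

/-- U' = |0⟩⟨1| ⊗ U + |1⟩⟨0| ⊗ U† on ℂ² ⊗ ℂ^N. -/
noncomputable def Usim {N : ℕ} (U : Matrix (Fin N) (Fin N) ℂ) :
    Matrix (Fin 2 × Fin N) (Fin 2 × Fin N) ℂ :=
  (!![(0 : ℂ), 1; 0, 0]) ⊗ₖ U + (!![(0 : ℂ), 0; 1, 0]) ⊗ₖ Uᴴ

/-- w_j^s = (|1⟩⊗e_j + s·|0⟩⊗u_j)/√2 where u_j is the j-th column of U and s = ±1. -/
noncomputable def wvec {N : ℕ} (U : Matrix (Fin N) (Fin N) ℂ) (s : ℂ) (j : Fin N) :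
    Fin 2 × Fin N → ℂ :=
  fun p => ((if p.1 = 1 ∧ p.2 = j then 1 else 0) + s * (if p.1 = 0 then U p.2 j else 0)) /
    (Real.sqrt 2 : ℝ)

/-! Orthogonality of the `w_j^-` gives `P_j P_k = 0` for the rank-one projections `P_j`, so the
product of the reflections `1 - 2 P_j` telescopes to `1 - 2 ∑ P_j`; unitarity of `U` makes
`∑ P_j` equal to `(1 - U') / 2`. -/

theorem List.prod_map_one_sub_of_pairwise {R : Type*} [Ring R] {l : List R}
    (hl : l.Pairwise fun a b => a * b = 0) : (l.map (1 - ·)).prod = 1 - l.sum := by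
  induction l with
  | nil => simp
  | cons a t ih =>
    obtain ⟨ha, ht⟩ := List.pairwise_cons.mp hl
    have hat : a * t.sum = 0 := by
      rw [← List.map_id t, ← List.sum_map_mul_left]
      exact List.sum_eq_zero (by simpa using ha)
    rw [List.map_cons, List.prod_cons, List.sum_cons, ih ht, sub_mul, one_mul, mul_sub, mul_one,
      hat]
    abel

lemma outerProd_mul_outerProd {d : Type*} [Fintype d] (v w : d → ℂ) :
    outerProd v * outerProd w = hinner v w • vecMulVec v (star w) := by
  rw [outerProd, outerProd, vecMulVec_mul_vecMulVec, vecMulVec_smul]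
  rfl

lemma ofReal_sqrt_two_mul_self : ((Real.sqrt 2 : ℝ) : ℂ) * ((Real.sqrt 2 : ℝ) : ℂ) = 2 := by
  exact_mod_cast Real.mul_self_sqrt zero_le_two

lemma hinner_wvec {N : ℕ} (U : Matrix (Fin N) (Fin N) ℂ) (s : ℂ) (j k : Fin N) :
    hinner (wvec U s j) (wvec U s k) =
      ((1 : Matrix (Fin N) (Fin N) ℂ) j k + star s * s * (Uᴴ * U) j k) / 2 := by
  simp only [hinner, wvec, Fintype.sum_prod_type, Fin.sum_univ_two, map_div₀,
    Complex.conj_ofReal, div_mul_div_comm, ofReal_sqrt_two_mul_self, ← Finset.sum_div,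
    mul_apply, conjTranspose_apply, one_apply]
  congr 1
  simp [Finset.mul_sum]
  rw [add_comm]
  simp only [@eq_comm _ k j]
  exact congrArg (_ + ·) (Finset.sum_congr rfl fun _ _ => by ring)

lemma Usim_eq_one_sub_two_smul_sum_outerProd_wvec {N : ℕ} (U : Matrix (Fin N) (Fin N) ℂ)
    (hU : U * Uᴴ = 1) : Usim U = 1 - (2 : ℂ) • ∑ j, outerProd (wvec U (-1) j) := by
  ext ⟨x, a⟩ ⟨y, b⟩
  have hab : ∑ j, U a j * starRingEnd ℂ (U b j) = if a = b then 1 else 0 := by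
    simpa [mul_apply, one_apply] using congrFun (congrFun hU a) b
  simp only [Usim, wvec, outerProd, Matrix.add_apply, kroneckerMap_apply, Matrix.sub_apply,
    Matrix.smul_apply, Matrix.sum_apply, vecMulVec_apply, one_apply, smul_eq_mul, Pi.star_apply,
    star_div₀, star_add, star_mul', RCLike.star_def, Complex.conj_ofReal, div_mul_div_comm,
    ofReal_sqrt_two_mul_self, ← Finset.sum_div, conjTranspose_apply, Prod.mk.injEq]
  -- the four blocks are `U Uᴴ`, `-U`, `-Uᴴ` and `1`, halved
  fin_cases x <;> fin_cases y <;> simp [hab] <;> ring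

/-- U' is the product of the N reflections about the w_j^-. -/
theorem Usim_eq_prod_refl {N : ℕ} (U : Matrix (Fin N) (Fin N) ℂ) (hU : IsUnitaryM U) :
    Usim U = (List.ofFn fun j : Fin N => reflOp (wvec U (-1) j)).prod := by
  set P : Fin N → Matrix (Fin 2 × Fin N) (Fin 2 × Fin N) ℂ :=
    fun j => (2 : ℂ) • outerProd (wvec U (-1) j)
  have horth : ∀ ⦃j k⦄, j < k → P j * P k = 0 := fun j k hjk => by
    simp only [P, smul_mul_smul, outerProd_mul_outerProd, hinner_wvec, hU.1,
      one_apply_ne hjk.ne, zero_add, mul_zero, zero_div, zero_smul, smul_zero]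
  calc Usim U = 1 - ∑ j, P j := by
        rw [Usim_eq_one_sub_two_smul_sum_outerProd_wvec U hU.2, Finset.smul_sum]
    _ = ((List.ofFn P).map (1 - ·)).prod := by
        rw [List.prod_map_one_sub_of_pairwise (List.pairwise_ofFn.mpr horth), List.sum_ofFn]
    _ = (List.ofFn fun j => reflOp (wvec U (-1) j)).prod := by
        rw [List.map_ofFn]
        rfl
end

section
/- Let ψ ∈ ℂ^N (N = 2^n) be a unit vector with at least two coordinates equal to zero, and let ε ∈ (0, 1]. Then for m = ⌈n/2 + 2 log₂(1/ε)⌉ + 5 there exists a unit vector φ ∈ ℂ^N all of whose coordinates have the form (a + bi)/2^m with a, b ∈ ℤ, such that ‖ψ − φ‖² ≤ 2·2^{n−2m} + 2√2·2^{n/2−m}, and consequently ‖R_ψ − R_φ‖_Fr ≤ ε. -/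
open Matrix Complex BigOperators Kronecker

/-!
Round every coordinate of `ψ` toward zero on the grid `(ℤ + iℤ)/2^m`. The rounded vector `ρ`
has squared norm `K/4^m` for a natural number `K ≤ 4^m`, and it vanishes wherever `ψ` does, so
by Lagrange's four-square theorem the deficit `(4^m - K)/4^m` can be placed exactly on the two
zero coordinates `j, l`, giving a unit vector `φ`. The error `ψ - φ` splits orthogonally into the
rounding error (at most `2/4^m` per coordinate) and the filler at `j, l`, whose squared norm
`1 - ‖ρ‖²` is at most `(2√2/2^m) ∑ |ψ_k| ≤ 2√2 · 2^(n/2)/2^m` by Cauchy–Schwarz. Finally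
`‖R_ψ - R_φ‖_Fr² = 8(1 - |⟨φ, ψ⟩|²) ≤ 8‖ψ - φ‖²`, and the choice of `m` makes this at most `ε²`.
-/

open ComplexConjugate

section InnerProduct

variable {ι : Type*} [Fintype ι]

lemma hinner_eq_dotProduct (u v : ι → ℂ) : hinner u v = star u ⬝ᵥ v := rfl

lemma dotProduct_star_eq_conj_hinner (u v : ι → ℂ) : u ⬝ᵥ star v = conj (hinner u v) := by
  simp [hinner, dotProduct, map_sum, mul_comm]

lemma hinner_self_eq_one {u : ι → ℂ} (hu : IsUnitVec u) : hinner u u = 1 := by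
  simp only [hinner, ← Complex.normSq_eq_conj_mul_self, ← Complex.sq_norm]
  exact_mod_cast hu

lemma trace_outerProd_mul_outerProd (u v : ι → ℂ) :
    trace (outerProd u * outerProd v) = Complex.normSq (hinner u v) := by
  rw [outerProd, outerProd, vecMulVec_mul_vecMulVec, trace_vecMulVec, dotProduct_smul,
    smul_eq_mul, ← hinner_eq_dotProduct, dotProduct_star_eq_conj_hinner, Complex.mul_conj]

lemma conj_hinner (u v : ι → ℂ) : conj (hinner u v) = hinner v u := by
  simp [hinner, map_sum, mul_comm]

lemma norm_hinner_le_one {u v : ι → ℂ} (hu : IsUnitVec u) (hv : IsUnitVec v) :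
    ‖hinner u v‖ ≤ 1 :=
  calc ‖hinner u v‖ ≤ ∑ i, ‖u i‖ * ‖v i‖ :=
        (norm_sum_le _ _).trans_eq (by simp)
    _ ≤ √(∑ i, ‖u i‖ ^ 2) * √(∑ i, ‖v i‖ ^ 2) := Real.sum_mul_le_sqrt_mul_sqrt _ _ _
    _ = 1 := by rw [hu, hv]; simp

lemma evnorm_sq (v : ι → ℂ) : evnorm v ^ 2 = ∑ i, ‖v i‖ ^ 2 :=
  Real.sq_sqrt (Finset.sum_nonneg fun _ _ => by positivity)

lemma sum_sq_norm_sub_eq {u v : ι → ℂ} (hu : IsUnitVec u) (hv : IsUnitVec v) :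
    ∑ i, ‖u i - v i‖ ^ 2 = 2 - 2 * (hinner v u).re := by
  have hi : ∀ i, ‖u i - v i‖ ^ 2 = ‖u i‖ ^ 2 + ‖v i‖ ^ 2 - 2 * (conj (v i) * u i).re := by
    intro i
    simp only [Complex.sq_norm, Complex.normSq_sub, mul_comm (conj (v i))]
  simp only [hi, Finset.sum_sub_distrib, Finset.sum_add_distrib, ← Finset.mul_sum,
    ← Complex.re_sum, hinner]
  rw [hu, hv]; ring

variable [DecidableEq ι]

lemma frobNorm_reflOp_sub_sq {u v : ι → ℂ} (hu : IsUnitVec u) (hv : IsUnitVec v) :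
    frobNorm (reflOp u - reflOp v) ^ 2 = 8 * (1 - ‖hinner v u‖ ^ 2) := by
  have hA : reflOp u - reflOp v = (2 : ℂ) • (outerProd v - outerProd u) := by
    rw [reflOp, reflOp, smul_sub]; abel
  have hP : ∀ w : ι → ℂ, (outerProd w)ᴴ = outerProd w := fun w => by
    simp [outerProd]
  have htr : trace ((reflOp u - reflOp v) * (reflOp u - reflOp v)ᴴ)
      = ((8 * (1 - ‖hinner v u‖ ^ 2) : ℝ) : ℂ) := by
    rw [hA, conjTranspose_smul, conjTranspose_sub, hP, hP, smul_mul_smul_comm, trace_smul,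
      sub_mul, mul_sub, mul_sub, trace_sub, trace_sub, trace_sub,
      trace_outerProd_mul_outerProd, trace_outerProd_mul_outerProd,
      trace_outerProd_mul_outerProd, trace_outerProd_mul_outerProd,
      hinner_self_eq_one hu, hinner_self_eq_one hv, ← conj_hinner v u, Complex.normSq_conj]
    simp only [Complex.sq_norm]
    norm_num; ring
  have hw := norm_hinner_le_one hv hu
  rw [frobNorm, htr, Complex.ofReal_re, Real.sq_sqrt]
  nlinarith [norm_nonneg (hinner v u)]

lemma frobNorm_reflOp_sub_sq_le {u v : ι → ℂ} (hu : IsUnitVec u) (hv : IsUnitVec v) :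
    frobNorm (reflOp u - reflOp v) ^ 2 ≤ 8 * evnorm (u - v) ^ 2 := by
  have hw := norm_hinner_le_one hv hu
  have hre := Complex.re_le_norm (hinner v u)
  rw [frobNorm_reflOp_sub_sq hu hv, evnorm_sq]
  simp only [Pi.sub_apply, sum_sq_norm_sub_eq hu hv]
  -- `1 - |w|² ≤ 2 (1 - |w|) ≤ 2 (1 - Re w)` for `|w| ≤ 1`
  nlinarith [norm_nonneg (hinner v u)]

end InnerProduct

-- Rounding toward zero rather than to the nearest integer keeps `|t| ≤ |x|`, so the rounded
-- vector has norm at most one and the deficit to be filled in is nonnegative.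
noncomputable def roundTowardZero (x : ℝ) : ℤ := if 0 ≤ x then ⌊x⌋ else ⌈x⌉

lemma abs_roundTowardZero_le (x : ℝ) : |(roundTowardZero x : ℝ)| ≤ |x| := by
  unfold roundTowardZero
  split_ifs with hx
  · have : (0 : ℝ) ≤ ⌊x⌋ := by exact_mod_cast Int.floor_nonneg.mpr hx
    rw [abs_of_nonneg this, abs_of_nonneg hx]
    exact Int.floor_le x
  · have : ((⌈x⌉ : ℤ) : ℝ) ≤ 0 := by exact_mod_cast Int.ceil_le.mpr (by push_cast; linarith)
    rw [abs_of_nonpos this, abs_of_neg (not_le.mp hx), neg_le_neg_iff]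
    exact Int.le_ceil x

lemma abs_sub_roundTowardZero_lt_one (x : ℝ) : |x - roundTowardZero x| < 1 := by
  unfold roundTowardZero
  split_ifs
  · rw [abs_lt]; constructor <;> linarith [Int.floor_le x, Int.lt_floor_add_one x]
  · rw [abs_lt]; constructor <;> linarith [Int.le_ceil x, Int.ceil_lt_add_one x]

lemma sq_sub_sq_le_of_abs_le {x t δ : ℝ} (hxt : |t| ≤ |x|) (hδ : |x - t| ≤ δ) :
    x ^ 2 - t ^ 2 ≤ 2 * δ * |x| := by
  have hdiff : |x| - |t| ≤ δ := (abs_sub_abs_le_abs_sub x t).trans hδ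
  rw [← sq_abs x, ← sq_abs t]
  nlinarith [abs_nonneg t]

lemma abs_re_add_abs_im_le (z : ℂ) : |z.re| + |z.im| ≤ √2 * ‖z‖ := by
  rw [← Real.sqrt_sq (by positivity : 0 ≤ |z.re| + |z.im|), Complex.norm_def,
    ← Real.sqrt_mul zero_le_two]
  apply Real.sqrt_le_sqrt
  rw [Complex.normSq_apply]
  nlinarith [sq_abs z.re, sq_abs z.im, sq_nonneg (|z.re| - |z.im|)]

section Dyadic

variable (m : ℕ)

def IsDyadicGaussian (z : ℂ) : Prop := ∃ a b : ℤ, z = ((a : ℂ) + (b : ℂ) * I) / (2 : ℝ) ^ m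

noncomputable def dyadicTrunc (x : ℝ) : ℝ := roundTowardZero (2 ^ m * x) / 2 ^ m

noncomputable def dyadicRound (z : ℂ) : ℂ := ⟨dyadicTrunc m z.re, dyadicTrunc m z.im⟩

variable {m}

lemma sq_norm_gaussian_div_two_pow (a b : ℤ) :
    ‖((a : ℂ) + (b : ℂ) * I) / (2 : ℝ) ^ m‖ ^ 2 = (a ^ 2 + b ^ 2) / 4 ^ m := by
  have hab : (a : ℂ) + (b : ℂ) * I = ((a : ℝ) : ℂ) + ((b : ℝ) : ℂ) * I := by push_cast; rfl
  rw [norm_div, div_pow, hab, Complex.sq_norm, Complex.normSq_add_mul_I, norm_pow,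
    Complex.norm_real, Real.norm_two, ← pow_mul, mul_comm, pow_mul]
  norm_num

lemma IsDyadicGaussian.zero : IsDyadicGaussian m 0 := ⟨0, 0, by simp⟩

lemma IsDyadicGaussian.add {z w : ℂ} (hz : IsDyadicGaussian m z) (hw : IsDyadicGaussian m w) :
    IsDyadicGaussian m (z + w) := by
  obtain ⟨a, b, rfl⟩ := hz
  obtain ⟨c, d, rfl⟩ := hw
  exact ⟨a + c, b + d, by push_cast; ring⟩

lemma IsDyadicGaussian.exists_sq_norm_eq {z : ℂ} (hz : IsDyadicGaussian m z) :
    ∃ K : ℕ, ‖z‖ ^ 2 = K / 4 ^ m := by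
  obtain ⟨a, b, rfl⟩ := hz
  refine ⟨a.natAbs ^ 2 + b.natAbs ^ 2, ?_⟩
  rw [sq_norm_gaussian_div_two_pow]
  simp [Nat.cast_natAbs, sq_abs]

lemma isDyadicGaussian_dyadicRound (z : ℂ) : IsDyadicGaussian m (dyadicRound m z) :=
  ⟨roundTowardZero (2 ^ m * z.re), roundTowardZero (2 ^ m * z.im), by
    rw [← Complex.ofReal_pow]
    apply Complex.ext
    · rw [Complex.div_ofReal_re]; simp [dyadicRound, dyadicTrunc]
    · rw [Complex.div_ofReal_im]; simp [dyadicRound, dyadicTrunc]⟩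

@[simp] lemma dyadicRound_zero : dyadicRound m 0 = 0 := by
  apply Complex.ext <;> simp [dyadicRound, dyadicTrunc, roundTowardZero]

lemma abs_dyadicTrunc_le (x : ℝ) : |dyadicTrunc m x| ≤ |x| := by
  have h := abs_roundTowardZero_le (2 ^ m * x)
  rw [abs_mul, abs_of_pos (by positivity : (0 : ℝ) < 2 ^ m)] at h
  rw [dyadicTrunc, abs_div, abs_of_pos (by positivity : (0 : ℝ) < 2 ^ m),
    div_le_iff₀ (by positivity)]
  linarith

lemma abs_sub_dyadicTrunc_le (x : ℝ) : |x - dyadicTrunc m x| ≤ 1 / 2 ^ m := by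
  have h := (abs_sub_roundTowardZero_lt_one (2 ^ m * x)).le
  have h2m : (0 : ℝ) < 2 ^ m := by positivity
  have hx : x - dyadicTrunc m x = (2 ^ m * x - roundTowardZero (2 ^ m * x)) / 2 ^ m := by
    rw [dyadicTrunc]; field_simp
  rw [hx, abs_div, abs_of_pos h2m]
  gcongr

lemma sq_norm_dyadicRound_le (z : ℂ) : ‖dyadicRound m z‖ ^ 2 ≤ ‖z‖ ^ 2 := by
  simp only [Complex.sq_norm, Complex.normSq_apply, dyadicRound, ← sq]
  gcongr ?_ + ?_ <;> exact sq_le_sq.mpr (abs_dyadicTrunc_le _)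

lemma sq_norm_sub_dyadicRound_le (z : ℂ) : ‖z - dyadicRound m z‖ ^ 2 ≤ 2 / 4 ^ m := by
  have h (x : ℝ) : (x - dyadicTrunc m x) ^ 2 ≤ (1 / 2 ^ m) ^ 2 := by
    simpa only [sq_abs] using pow_le_pow_left₀ (abs_nonneg _) (abs_sub_dyadicTrunc_le x) 2
  simp only [Complex.sq_norm, Complex.normSq_apply, dyadicRound, ← sq, Complex.sub_re,
    Complex.sub_im]
  calc _ ≤ (1 / 2 ^ m) ^ 2 + (1 / 2 ^ m) ^ 2 := add_le_add (h _) (h _)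
    _ = 2 / 4 ^ m := by rw [div_pow, ← pow_mul, mul_comm, pow_mul]; norm_num; ring

lemma sq_norm_sub_sq_norm_dyadicRound_le (z : ℂ) :
    ‖z‖ ^ 2 - ‖dyadicRound m z‖ ^ 2 ≤ 2 * √2 * ‖z‖ / 2 ^ m := by
  have hre := sq_sub_sq_le_of_abs_le (abs_dyadicTrunc_le (m := m) z.re) (abs_sub_dyadicTrunc_le _)
  have him := sq_sub_sq_le_of_abs_le (abs_dyadicTrunc_le (m := m) z.im) (abs_sub_dyadicTrunc_le _)
  have hz := abs_re_add_abs_im_le z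
  simp only [Complex.sq_norm, Complex.normSq_apply, dyadicRound, ← sq] at *
  calc _ ≤ 2 * (1 / 2 ^ m) * |z.re| + 2 * (1 / 2 ^ m) * |z.im| := by linarith
    _ = 2 / 2 ^ m * (|z.re| + |z.im|) := by ring
    _ ≤ 2 / 2 ^ m * (√2 * ‖z‖) := by gcongr
    _ = 2 * √2 * ‖z‖ / 2 ^ m := by ring

end Dyadic

section Vectors

variable {ι : Type*} [Fintype ι] {m : ℕ}

lemma sum_sq_norm_add_of_disjoint {f g : ι → ℂ} (h : ∀ i, f i = 0 ∨ g i = 0) :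
    ∑ i, ‖f i + g i‖ ^ 2 = ∑ i, ‖f i‖ ^ 2 + ∑ i, ‖g i‖ ^ 2 := by
  rw [← Finset.sum_add_distrib]
  refine Finset.sum_congr rfl fun i _ => ?_
  rcases h i with h | h <;> simp [h]

lemma sum_norm_le_sqrt_card {ψ : ι → ℂ} (hψ : IsUnitVec ψ) :
    ∑ i, ‖ψ i‖ ≤ √(Fintype.card ι) := by
  simpa [show ∑ i, ‖ψ i‖ ^ 2 = 1 from hψ] using
    Real.sum_mul_le_sqrt_mul_sqrt Finset.univ (fun _ => 1) (fun i => ‖ψ i‖)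

lemma exists_sum_sq_norm_eq_natCast_div {v : ι → ℂ} (hv : ∀ i, IsDyadicGaussian m (v i)) :
    ∃ K : ℕ, ∑ i, ‖v i‖ ^ 2 = K / 4 ^ m := by
  choose K hK using fun i => (hv i).exists_sq_norm_eq
  exact ⟨∑ i, K i, by simp [hK, Finset.sum_div]⟩

lemma sum_sq_norm_sub_dyadicRound_le (ψ : ι → ℂ) :
    ∑ i, ‖ψ i - dyadicRound m (ψ i)‖ ^ 2 ≤ Fintype.card ι * (2 / 4 ^ m) := by
  simpa using Finset.sum_le_sum fun i (_ : i ∈ Finset.univ) =>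
    sq_norm_sub_dyadicRound_le (m := m) (ψ i)

lemma one_sub_sum_sq_norm_dyadicRound_le {ψ : ι → ℂ} (hψ : IsUnitVec ψ) :
    1 - ∑ i, ‖dyadicRound m (ψ i)‖ ^ 2 ≤ 2 * √2 * √(Fintype.card ι) / 2 ^ m :=
  calc 1 - ∑ i, ‖dyadicRound m (ψ i)‖ ^ 2
      = ∑ i, (‖ψ i‖ ^ 2 - ‖dyadicRound m (ψ i)‖ ^ 2) := by rw [Finset.sum_sub_distrib, hψ]
    _ ≤ ∑ i, 2 * √2 * ‖ψ i‖ / 2 ^ m :=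
        Finset.sum_le_sum fun i _ => sq_norm_sub_sq_norm_dyadicRound_le (ψ i)
    _ = 2 * √2 * (∑ i, ‖ψ i‖) / 2 ^ m := by rw [Finset.mul_sum, Finset.sum_div]
    _ ≤ 2 * √2 * √(Fintype.card ι) / 2 ^ m := by gcongr; exact sum_norm_le_sqrt_card hψ

variable [DecidableEq ι]

lemma exists_dyadic_supported_on_pair {j l : ι} (hjl : j ≠ l) {K : ℕ} (hK : K ≤ 4 ^ m) :
    ∃ η : ι → ℂ, (∀ i, IsDyadicGaussian m (η i)) ∧ (∀ i, i ≠ j → i ≠ l → η i = 0) ∧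
      ∑ i, ‖η i‖ ^ 2 = 1 - K / 4 ^ m := by
  obtain ⟨p, q, r, t, hpqrt⟩ := Nat.sum_four_squares (4 ^ m - K)
  let u : ℂ := (((p : ℤ) : ℂ) + ((q : ℤ) : ℂ) * I) / (2 : ℝ) ^ m
  let v : ℂ := (((r : ℤ) : ℂ) + ((t : ℤ) : ℂ) * I) / (2 : ℝ) ^ m
  refine ⟨fun i => if i = j then u else if i = l then v else 0, fun i => ?_,
    fun i hj hl => by simp [hj, hl], ?_⟩
  · dsimp only
    split_ifs
    exacts [⟨p, q, rfl⟩, ⟨r, t, rfl⟩, .zero]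
  · rw [Fintype.sum_eq_add j l hjl (fun i ⟨hj, hl⟩ => by simp [hj, hl])]
    simp only [if_pos, if_neg hjl.symm, u, v, sq_norm_gaussian_div_two_pow]
    have hcast : ((4 ^ m - K : ℕ) : ℝ) = 4 ^ m - K := by push_cast [hK]; ring
    rw [← hpqrt] at hcast
    field_simp
    push_cast at hcast ⊢
    linarith

theorem exists_dyadic_unitVec_near {ψ : ι → ℂ} (hψ : IsUnitVec ψ) {j l : ι} (hjl : j ≠ l)
    (hj : ψ j = 0) (hl : ψ l = 0) (m : ℕ) :
    ∃ φ : ι → ℂ, (∀ i, IsDyadicGaussian m (φ i)) ∧ IsUnitVec φ ∧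
      evnorm (ψ - φ) ^ 2 ≤
        Fintype.card ι * (2 / 4 ^ m) + 2 * √2 * √(Fintype.card ι) / 2 ^ m := by
  set ρ : ι → ℂ := fun i => dyadicRound m (ψ i)
  obtain ⟨K, hK⟩ :=
    exists_sum_sq_norm_eq_natCast_div fun i => isDyadicGaussian_dyadicRound (m := m) (ψ i)
  have hK4 : K ≤ 4 ^ m := by
    have hρ : ∑ i, ‖ρ i‖ ^ 2 ≤ 1 := (hψ : ∑ i, ‖ψ i‖ ^ 2 = 1) ▸
      Finset.sum_le_sum fun i _ => sq_norm_dyadicRound_le (ψ i)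
    rw [hK, div_le_one (by positivity)] at hρ
    exact_mod_cast hρ
  obtain ⟨η, hηdy, hηsupp, hη⟩ := exists_dyadic_supported_on_pair hjl hK4
  have hdisj : ∀ f : ι → ℂ, f j = 0 → f l = 0 → ∀ i, f i = 0 ∨ η i = 0 := by
    intro f hfj hfl i
    by_cases hij : i = j
    · exact .inl (hij ▸ hfj)
    by_cases hil : i = l
    · exact .inl (hil ▸ hfl)
    exact .inr (hηsupp i hij hil)
  refine ⟨ρ + η, fun i => (isDyadicGaussian_dyadicRound _).add (hηdy i), ?_, ?_⟩
  · show ∑ i, ‖ρ i + η i‖ ^ 2 = 1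
    rw [sum_sq_norm_add_of_disjoint (hdisj ρ (by simp [ρ, hj]) (by simp [ρ, hl])), hK, hη]
    ring
  · have hsub : ∑ i, ‖(ψ - (ρ + η)) i‖ ^ 2 = ∑ i, ‖ψ i - ρ i‖ ^ 2 + ∑ i, ‖η i‖ ^ 2 := by
      have h := hdisj (ψ - ρ) (by simp [ρ, hj]) (by simp [ρ, hl])
      simpa [sub_add_eq_sub_sub, ← sub_eq_add_neg] using
        sum_sq_norm_add_of_disjoint (g := -η) (by simpa using h)
    rw [evnorm_sq, hsub, hη, ← hK]
    exact add_le_add (sum_sq_norm_sub_dyadicRound_le ψ) (one_sub_sum_sq_norm_dyadicRound_le hψ)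

end Vectors

lemma two_rpow_sub_le_sq_div {x y ε : ℝ} (hε : 0 < ε)
    (hxy : x + 2 * Real.logb 2 (1 / ε) + 5 ≤ y) :
    (2 : ℝ) ^ (x - y) ≤ ε ^ 2 / 32 := by
  have hlog : Real.logb 2 (ε ^ 2 / 32) = -2 * Real.logb 2 (1 / ε) - 5 := by
    rw [Real.logb_div (by positivity) (by norm_num), Real.logb_pow, one_div, Real.logb_inv,
      show (32 : ℝ) = 2 ^ (5 : ℕ) by norm_num, Real.logb_pow, Real.logb_self_eq_one one_lt_two]
    ring
  calc (2 : ℝ) ^ (x - y) ≤ 2 ^ Real.logb 2 (ε ^ 2 / 32) :=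
        Real.rpow_le_rpow_of_exponent_le one_le_two (by rw [hlog]; linarith)
    _ = ε ^ 2 / 32 := Real.rpow_logb two_pos (by norm_num) (by positivity)

/-- a unit vector in ℂ^(2^n) with at least two zero coordinates can be
approximated by a unit vector with coordinates in (ℤ+iℤ)/2^m, with the stated bounds. -/
theorem approx_unit_vector_with_zeros (n : ℕ) (ψ : Fin (2 ^ n) → ℂ) (hψ : IsUnitVec ψ)
    (j l : Fin (2 ^ n)) (hjl : j ≠ l) (hj : ψ j = 0) (hl : ψ l = 0)
    (ε : ℝ) (hε0 : 0 < ε) (hε1 : ε ≤ 1) :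
    ∀ m : ℕ, m = ⌈(n : ℝ) / 2 + 2 * Real.logb 2 (1 / ε)⌉₊ + 5 →
      ∃ φ : Fin (2 ^ n) → ℂ,
        (∀ k, ∃ a b : ℤ, φ k = ((a : ℂ) + (b : ℂ) * Complex.I) / (2 : ℝ) ^ m) ∧
        IsUnitVec φ ∧
        evnorm (ψ - φ) ^ 2 ≤
          2 * (2 : ℝ) ^ ((n : ℝ) - 2 * m) + 2 * Real.sqrt 2 * (2 : ℝ) ^ ((n : ℝ) / 2 - m) ∧
        frobNorm (reflOp ψ - reflOp φ) ≤ ε := by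
  intro m hm
  obtain ⟨φ, hφdy, hφ, hdist⟩ := exists_dyadic_unitVec_near hψ hjl hj hl m
  set Y := (2 : ℝ) ^ ((n : ℝ) / 2 - m)
  have hY : Y ≤ ε ^ 2 / 32 := two_rpow_sub_le_sq_div hε0 <| by
    rw [hm]; push_cast; linarith [Nat.le_ceil ((n : ℝ) / 2 + 2 * Real.logb 2 (1 / ε))]
  have hYsq : (2 : ℝ) ^ ((n : ℝ) - 2 * m) = Y ^ 2 := by
    rw [← Real.rpow_natCast, ← Real.rpow_mul zero_le_two]; ring_nf
  have hYdiv : Y = √(2 ^ n) / 2 ^ m := by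
    rw [show Y = (2 : ℝ) ^ ((n : ℝ) / 2 - m) from rfl, Real.rpow_sub two_pos,
      Real.rpow_natCast 2 m, Real.sqrt_eq_rpow, ← Real.rpow_natCast 2 n,
      ← Real.rpow_mul zero_le_two]
    ring_nf
  have hdist' : evnorm (ψ - φ) ^ 2 ≤ 2 * Y ^ 2 + 2 * √2 * Y := by
    convert hdist using 2
    · rw [hYdiv, div_pow, Real.sq_sqrt (by positivity), ← pow_mul, mul_comm m 2, pow_mul,
        Fintype.card_fin]
      push_cast; norm_num; ring
    · rw [hYdiv, Fintype.card_fin]; push_cast; ring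
  refine ⟨φ, hφdy, hφ, hYsq ▸ hdist', ?_⟩
  have hfrob := frobNorm_reflOp_sub_sq_le hψ hφ
  have hsqrt2 : √2 < 3 / 2 := by
    rw [Real.sqrt_lt' (by norm_num)]; norm_num
  refine (pow_le_pow_iff_left₀ (Real.sqrt_nonneg _ : 0 ≤ frobNorm _) hε0.le two_ne_zero).mp ?_
  have hY0 : 0 ≤ Y := Real.rpow_nonneg zero_le_two _
  have hε2 : ε ^ 2 ≤ 1 := pow_le_one₀ hε0.le hε1
  calc frobNorm (reflOp ψ - reflOp φ) ^ 2 ≤ 8 * (2 * Y ^ 2 + 2 * √2 * Y) := by linarith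
    _ = 16 * Y ^ 2 + 16 * √2 * Y := by ring
    _ ≤ 16 * (ε ^ 2 / 32) ^ 2 + 16 * (3 / 2) * (ε ^ 2 / 32) := by gcongr
    _ ≤ ε ^ 2 := by nlinarith
end
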